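/- Let (R_i, t_i) be a perfectoid tower arising from (R_0, I_0) equipped with a system of perfectoid pillars (I_i), and let π_i : R_i/I_0R_i → R_i/I_iR_i be the natural projections. Then for every i ≥ 0 there exists a unique ring isomorphism F'_i : R_{i+1}/I_{i+1}R_{i+1} → R_i/I_iR_i such that π_i ∘ F_i = F'_i ∘ π_{i+1}. -/

import Mathlib

set_option synthInstance.maxHeartbeats 1000000
set_option maxHeartbeats 1000000
universe u

namespace PaperTower

variable {R : ℕ → Type u} [∀ i, CommRing (R i)]

/-- The set of `J`-torsion elements of a commutative ring. -/
def torSet {A : Type*} [CommRing A] (J : Ideal A) : Set A :=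
  {x | ∀ a ∈ J, ∃ n : ℕ, 0 < n ∧ a ^ n * x = 0}

/-- Cast ring homomorphism between quotients at equal indices. -/
def qcast (I : ∀ i, Ideal (R i)) {m n : ℕ} (h : m = n) :
    (R m ⧸ I m) →+* (R n ⧸ I n) := by subst h; exact RingHom.id _

/-- The `j`-th small tilt (inverse quasi-perfection) of a tower, as a subring of the
product of the quotients, consisting of sequences compatible with the Frobenius
projections `F`. -/
def Tilt (I : ∀ i, Ideal (R i))
    (F : ∀ i, (R (i + 1) ⧸ I (i + 1)) →+* (R i ⧸ I i)) (j : ℕ) :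
    Subring (∀ i, R (j + i) ⧸ I (j + i)) where
  carrier := {a | ∀ i, F (j + i) (a (i + 1)) = a i}
  zero_mem' := by
    intro i
    show F (j + i) 0 = 0
    simp
  one_mem' := by
    intro i
    show F (j + i) 1 = 1
    simp
  add_mem' := by
    intro a b ha hb i
    show F (j + i) (a (i + 1) + b (i + 1)) = a i + b i
    rw [map_add, ha i, hb i]
  mul_mem' := by
    intro a b ha hb i
    show F (j + i) (a (i + 1) * b (i + 1)) = a i * b i
    rw [map_mul, ha i, hb i]
  neg_mem' := by
    intro a ha i
    show F (j + i) (-(a (i + 1))) = -(a i)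
    rw [map_neg, ha i]

/-- The `m`-th projection `Φ^{(j)}_m` from the `j`-th small tilt. -/
def proj (I : ∀ i, Ideal (R i))
    (F : ∀ i, (R (i + 1) ⧸ I (i + 1)) →+* (R i ⧸ I i)) (j m : ℕ) :
    Tilt I F j →+* (R (j + m) ⧸ I (j + m)) :=
  (Pi.evalRingHom _ m).comp (Tilt I F j).subtype

end PaperTower

theorem Ideal.existsUnique_quotientEquiv_of_surjective {A B : Type*} [CommRing A] [CommRing B]
    (f : A →+* B) (hf : Function.Surjective f) {J : Ideal B} {J' : Ideal A}
    (hJ : J.comap f = J') :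
    ∃! e : (A ⧸ J') ≃+* (B ⧸ J),
      ∀ x : A, Ideal.Quotient.mk J (f x) = e (Ideal.Quotient.mk J' x) := by
  subst hJ
  refine ⟨RingEquiv.ofBijective (Ideal.quotientMap J f le_rfl)
      ⟨Ideal.quotientMap_injective, Ideal.quotientMap_surjective hf⟩, fun _ => rfl, ?_⟩
  intro e he
  ext y
  obtain ⟨x, rfl⟩ := Ideal.Quotient.mk_surjective y
  exact (he x).symm

namespace PaperTower

theorem stmt13
    (R : ℕ → Type u) [∀ i, CommRing (R i)]
    (I : ∀ i, Ideal (R i))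
    (F : ∀ i, (R (i + 1) ⧸ I (i + 1)) →+* (R i ⧸ I i))
    (hFsurj : ∀ i, Function.Surjective (F i))
    (Ipill : ∀ i, Ideal (R i))
    (hpill : ∀ i, Ideal.comap (F i) ((Ipill i).map (Ideal.Quotient.mk (I i)))
        = (Ipill (i + 1)).map (Ideal.Quotient.mk (I (i + 1))))
    (i : ℕ) :
    ∃! F' : ((R (i + 1) ⧸ I (i + 1)) ⧸ (Ipill (i + 1)).map (Ideal.Quotient.mk (I (i + 1))))
        ≃+* ((R i ⧸ I i) ⧸ (Ipill i).map (Ideal.Quotient.mk (I i))),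
      ∀ x : R (i + 1) ⧸ I (i + 1),
        Ideal.Quotient.mk ((Ipill i).map (Ideal.Quotient.mk (I i))) (F i x)
          = F' (Ideal.Quotient.mk ((Ipill (i + 1)).map (Ideal.Quotient.mk (I (i + 1)))) x) :=
  Ideal.existsUnique_quotientEquiv_of_surjective (F i) (hFsurj i) (hpill i)

end PaperTower
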